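/- If (X,T) is mean equicontinuous, then every regionally proximal pair is proximal, i.e., Q(X,T) = P(X,T). -/

import Mathlib

open Filter Topology MeasureTheory
open scoped Classical

noncomputable def avgDist {Z : Type*} [MetricSpace Z] (R : Z → Z) (x y : Z) (n : ℕ) : ℝ :=
  (n : ℝ)⁻¹ * ∑ i ∈ Finset.range n, dist (R^[i] x) (R^[i] y)

def MeanEquicontinuous {Z : Type*} [MetricSpace Z] (R : Z → Z) : Prop :=
  ∀ ε > 0, ∃ δ > 0, ∀ x y : Z, dist x y < δ →
    Filter.limsup (avgDist R x y) Filter.atTop < ε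

def MeanEqPtAt {Z : Type*} [MetricSpace Z] (R : Z → Z) (x : Z) : Prop :=
  ∀ ε > 0, ∃ δ > 0, ∀ y : Z, dist x y < δ →
    Filter.limsup (avgDist R x y) Filter.atTop < ε

def MeanSensitive {Z : Type*} [MetricSpace Z] (R : Z → Z) : Prop :=
  ∃ δ > 0, ∀ x : Z, ∀ ε > 0, ∃ y : Z, dist x y < ε ∧
    δ < Filter.limsup (avgDist R x y) Filter.atTop

/-!
The upper mean distance `limsup (avgDist T x y)` is a pseudometric which, in a bounded space,
does not increase when both points are moved along their orbits by the same `Tⁿ`, since the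
shift only drops finitely many terms of a Cesàro average. For a regionally proximal pair
`(x, y)`, mean equicontinuity provides `x'`, `y'` and `n` with the upper mean distances of
`(x, x')`, `(Tⁿx', Tⁿy')` and `(y', y)` all below `ε / 3`; hence that of `(Tⁿx, Tⁿy)` is below `ε`,
and some term `dist (Tⁱ⁺ⁿx) (Tⁱ⁺ⁿy)` of the averages is below `ε`.
-/

section avgDist

variable {Z : Type*} [MetricSpace Z] (R : Z → Z)

lemma avgDist_nonneg (x y : Z) (m : ℕ) : 0 ≤ avgDist R x y m := by
  unfold avgDist
  positivity

lemma avgDist_le_diam [BoundedSpace Z] (x y : Z) (m : ℕ) :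
    avgDist R x y m ≤ Metric.diam (Set.univ : Set Z) := by
  have hdist (a b : Z) : dist a b ≤ Metric.diam (Set.univ : Set Z) :=
    Metric.dist_le_diam_of_mem BoundedSpace.bounded_univ trivial trivial
  unfold avgDist
  rcases m.eq_zero_or_pos with rfl | hm
  · simpa using Metric.diam_nonneg
  calc (m : ℝ)⁻¹ * ∑ i ∈ Finset.range m, dist (R^[i] x) (R^[i] y)
      ≤ (m : ℝ)⁻¹ * ∑ _i ∈ Finset.range m, Metric.diam (Set.univ : Set Z) := by
        gcongr with i; exact hdist _ _
    _ = Metric.diam (Set.univ : Set Z) := by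
        rw [Finset.sum_const, Finset.card_range, nsmul_eq_mul]
        field_simp

lemma avgDist_triangle (x y z : Z) (m : ℕ) :
    avgDist R x z m ≤ avgDist R x y m + avgDist R y z m := by
  unfold avgDist
  rw [← mul_add, ← Finset.sum_add_distrib]
  gcongr with i
  exact dist_triangle _ _ _

lemma natCast_mul_avgDist (x y : Z) (m : ℕ) :
    m * avgDist R x y m = ∑ i ∈ Finset.range m, dist (R^[i] x) (R^[i] y) := by
  rcases m.eq_zero_or_pos with rfl | hm
  · simp
  · unfold avgDist
    field_simp

lemma avgDist_iterate_le [BoundedSpace Z] (x y : Z) (n m : ℕ) :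
    avgDist R (R^[n] x) (R^[n] y) m
      ≤ avgDist R x y (m + n) + n * Metric.diam (Set.univ : Set Z) / m := by
  rcases m.eq_zero_or_pos with rfl | hm
  · simpa [avgDist] using avgDist_nonneg R x y n
  have hm' : (0 : ℝ) < m := by exact_mod_cast hm
  refine le_of_mul_le_mul_left ?_ hm'
  calc m * avgDist R (R^[n] x) (R^[n] y) m
      = ∑ i ∈ Finset.range m, dist (R^[n + i] x) (R^[n + i] y) := by
        simp only [natCast_mul_avgDist, Function.iterate_add_apply, add_comm n]
    _ ≤ ∑ i ∈ Finset.range (n + m), dist (R^[i] x) (R^[i] y) := by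
        rw [Finset.sum_range_add]
        exact le_add_of_nonneg_left (Finset.sum_nonneg fun i _ ↦ dist_nonneg)
    _ = m * avgDist R x y (m + n) + n * avgDist R x y (m + n) := by
        rw [← add_mul, add_comm n, ← Nat.cast_add, natCast_mul_avgDist]
    _ ≤ m * avgDist R x y (m + n) + n * Metric.diam (Set.univ : Set Z) := by
        gcongr; exact avgDist_le_diam R x y _
    _ = m * (avgDist R x y (m + n) + n * Metric.diam (Set.univ : Set Z) / m) := by
        field_simp

lemma isBoundedUnder_ge_avgDist (x y : Z) :
    IsBoundedUnder (· ≥ ·) atTop (avgDist R x y) :=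
  isBoundedUnder_of ⟨0, avgDist_nonneg R x y⟩

lemma isBoundedUnder_le_avgDist [BoundedSpace Z] (x y : Z) :
    IsBoundedUnder (· ≤ ·) atTop (avgDist R x y) :=
  isBoundedUnder_of ⟨_, avgDist_le_diam R x y⟩

variable [BoundedSpace Z]

lemma limsup_avgDist_triangle (x y z : Z) :
    limsup (avgDist R x z) atTop
      ≤ limsup (avgDist R x y) atTop + limsup (avgDist R y z) atTop :=
  calc limsup (avgDist R x z) atTop
      ≤ limsup (avgDist R x y + avgDist R y z) atTop :=
        limsup_le_limsup (Eventually.of_forall (avgDist_triangle R x y z))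
          (isBoundedUnder_ge_avgDist R x z).isCoboundedUnder_le
          (isBoundedUnder_le_add (isBoundedUnder_le_avgDist R x y)
            (isBoundedUnder_le_avgDist R y z))
    _ ≤ _ := limsup_add_le (isBoundedUnder_ge_avgDist R x y) (isBoundedUnder_le_avgDist R x y)
          (isBoundedUnder_ge_avgDist R y z).isCoboundedUnder_le (isBoundedUnder_le_avgDist R y z)

lemma limsup_avgDist_iterate_le (x y : Z) (n : ℕ) :
    limsup (avgDist R (R^[n] x) (R^[n] y)) atTop ≤ limsup (avgDist R x y) atTop := by
  set D := Metric.diam (Set.univ : Set Z)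
  have hshift : limsup (fun m ↦ avgDist R x y (m + n)) atTop = limsup (avgDist R x y) atTop :=
    limsup_nat_add _ n
  have hvanish : Tendsto (fun m : ℕ ↦ n * D / m) atTop (𝓝 0) :=
    tendsto_const_div_atTop_nhds_zero_nat _
  have hbdd : IsBoundedUnder (· ≤ ·) atTop (fun m ↦ avgDist R x y (m + n)) :=
    isBoundedUnder_of ⟨_, fun m ↦ avgDist_le_diam R x y (m + n)⟩
  calc limsup (avgDist R (R^[n] x) (R^[n] y)) atTop
      ≤ limsup ((fun m ↦ avgDist R x y (m + n)) + fun m : ℕ ↦ n * D / m) atTop :=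
        limsup_le_limsup (Eventually.of_forall (avgDist_iterate_le R x y n))
          (isBoundedUnder_ge_avgDist R _ _).isCoboundedUnder_le
          (isBoundedUnder_le_add hbdd hvanish.isBoundedUnder_le)
    _ ≤ limsup (fun m ↦ avgDist R x y (m + n)) atTop + limsup (fun m : ℕ ↦ n * D / m) atTop :=
        limsup_add_le (isBoundedUnder_of ⟨0, fun m ↦ avgDist_nonneg R x y (m + n)⟩) hbdd
          hvanish.isCoboundedUnder_le hvanish.isBoundedUnder_le
    _ = limsup (avgDist R x y) atTop := by rw [hshift, hvanish.limsup_eq, add_zero]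

lemma exists_dist_iterate_lt_of_limsup_avgDist_lt {x y : Z} {ε : ℝ}
    (h : limsup (avgDist R x y) atTop < ε) : ∃ i, dist (R^[i] x) (R^[i] y) < ε := by
  obtain ⟨m, hm, hlt⟩ :=
    ((eventually_lt_of_limsup_lt h (isBoundedUnder_le_avgDist R x y)).and
      (eventually_gt_atTop 0)).exists
  obtain ⟨i, -, hi⟩ : ∃ i ∈ Finset.range m, dist (R^[i] x) (R^[i] y) < ε := by
    refine Finset.exists_lt_of_sum_lt ?_
    rw [← natCast_mul_avgDist, Finset.sum_const, Finset.card_range, nsmul_eq_mul]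
    exact mul_lt_mul_of_pos_left hm (by exact_mod_cast hlt)
  exact ⟨i, hi⟩

end avgDist

lemma Real.iInf_eq_zero_iff_forall_exists_lt {ι : Type*} [Nonempty ι] {f : ι → ℝ}
    (hf : ∀ i, 0 ≤ f i) : ⨅ i, f i = 0 ↔ ∀ ε > 0, ∃ i, f i < ε := by
  refine ⟨fun h ε hε ↦ exists_lt_of_ciInf_lt (h ▸ hε), fun h ↦ ?_⟩
  exact ciInf_eq_of_forall_ge_of_forall_gt_exists_lt hf fun ε hε ↦ h ε hε

theorem regionallyProximal_eq_proximal_of_meanEquicontinuous_general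
    {X : Type*} [MetricSpace X] [CompactSpace X] (T : X → X)
    (h : MeanEquicontinuous T) :
    {p : X × X | ∀ ε > 0, ∃ x' y' : X, dist p.1 x' < ε ∧ dist p.2 y' < ε ∧
        ∃ n : ℕ, dist (T^[n] x') (T^[n] y') < ε} =
      {p : X × X | (⨅ n : ℕ, dist (T^[n] p.1) (T^[n] p.2)) = 0} := by
  ext ⟨x, y⟩
  simp only [Set.mem_ofPred_eq, Real.iInf_eq_zero_iff_forall_exists_lt fun _ ↦ dist_nonneg]
  refine ⟨fun hQ ε hε ↦ ?_, fun hP ε hε ↦ ?_⟩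
  · obtain ⟨δ, hδ, hmean⟩ := h (ε / 3) (by positivity)
    obtain ⟨x', y', hx, hy, n, hn⟩ := hQ δ hδ
    have hy' : dist y' y < δ := by rwa [dist_comm]
    have hlt : limsup (avgDist T (T^[n] x) (T^[n] y)) atTop < ε :=
      calc limsup (avgDist T (T^[n] x) (T^[n] y)) atTop
          ≤ limsup (avgDist T (T^[n] x) (T^[n] x')) atTop
            + (limsup (avgDist T (T^[n] x') (T^[n] y')) atTop
              + limsup (avgDist T (T^[n] y') (T^[n] y)) atTop) :=
            (limsup_avgDist_triangle T _ (T^[n] x') _).trans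
              (by gcongr; exact limsup_avgDist_triangle T _ _ _)
        _ ≤ limsup (avgDist T x x') atTop
            + (limsup (avgDist T (T^[n] x') (T^[n] y')) atTop
              + limsup (avgDist T y' y) atTop) := by
            gcongr <;> exact limsup_avgDist_iterate_le T _ _ n
        _ < ε / 3 + (ε / 3 + ε / 3) := by
            gcongr
            exacts [hmean x x' hx, hmean _ _ hn, hmean y' y hy']
        _ = ε := by ring
    obtain ⟨i, hi⟩ := exists_dist_iterate_lt_of_limsup_avgDist_lt T hlt
    exact ⟨i + n, by rwa [Function.iterate_add_apply, Function.iterate_add_apply]⟩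
  · obtain ⟨n, hn⟩ := hP ε hε
    exact ⟨x, y, by simpa using hε, by simpa using hε, n, hn⟩

theorem regionallyProximal_eq_proximal_of_meanEquicontinuous
    {X : Type*} [MetricSpace X] [CompactSpace X] (T : X → X) (hT : Continuous T)
    (h : MeanEquicontinuous T) :
    {p : X × X | ∀ ε > 0, ∃ x' y' : X, dist p.1 x' < ε ∧ dist p.2 y' < ε ∧
        ∃ n : ℕ, dist (T^[n] x') (T^[n] y') < ε} =
      {p : X × X | (⨅ n : ℕ, dist (T^[n] p.1) (T^[n] p.2)) = 0} :=
  regionallyProximal_eq_proximal_of_meanEquicontinuous_general T h
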